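/- Let ρ be an X-type three-qubit state and let σ be its cyclic permutation to ordering BCA, i.e. σ_{(j,k,i),(j',k',i')} = ρ_{(i,j,k),(i',j',k')}. Let τ²_{BC|A} = (1/3)σ + (2/3)·(I₄/4 ⊗ Tr₁₂ σ), where Tr₁₂ traces out the first two factors of σ. Define T²_{a,−} = (9/4)ρ₃₃ρ₆₆ + (3/4)(ρ₁₁ρ₆₆+ρ₂₂ρ₆₆+ρ₄₄ρ₆₆+ρ₃₃ρ₅₅+ρ₃₃ρ₇₇+ρ₃₃ρ₈₈) + (1/4)(ρ₁₁ρ₅₅+ρ₁₁ρ₇₇+ρ₁₁ρ₈₈+ρ₂₂ρ₅₅+ρ₂₂ρ₇₇+ρ₂₂ρ₈₈+ρ₄₄ρ₅₅+ρ₄₄ρ₇₇+ρ₄₄ρ₈₈), T²_{b,−} = (9/4)ρ₄₄ρ₅₅ + (3/4)(ρ₁₁ρ₅₅+ρ₂₂ρ₅₅+ρ₃₃ρ₅₅+ρ₄₄ρ₆₆+ρ₄₄ρ₇₇+ρ₄₄ρ₈₈) + (1/4)(ρ₁₁ρ₆₆+ρ₁₁ρ₇₇+ρ₁₁ρ₈₈+ρ₂₂ρ₆₆+ρ₂₂ρ₇₇+ρ₂₂ρ₈₈+ρ₃₃ρ₆₆+ρ₃₃ρ₇₇+ρ₃₃ρ₈₈),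 T²_{b,+} = (9/4)ρ₁₁ρ₈₈ + (3/4)(ρ₁₁ρ₅₅+ρ₁₁ρ₆₆+ρ₁₁ρ₇₇+ρ₂₂ρ₈₈+ρ₃₃ρ₈₈+ρ₄₄ρ₈₈) + (1/4)(ρ₂₂ρ₅₅+ρ₂₂ρ₆₆+ρ₂₂ρ₇₇+ρ₃₃ρ₅₅+ρ₃₃ρ₆₆+ρ₃₃ρ₇₇+ρ₄₄ρ₅₅+ρ₄₄ρ₆₆+ρ₄₄ρ₇₇), T²_{a,+} = (9/4)ρ₂₂ρ₇₇ + (3/4)(ρ₂₂ρ₅₅+ρ₂₂ρ₆₆+ρ₂₂ρ₈₈+ρ₁₁ρ₇₇+ρ₃₃ρ₇₇+ρ₄₄ρ₇₇) + (1/4)(ρ₁₁ρ₅₅+ρ₁₁ρ₆₆+ρ₁₁ρ₈₈+ρ₃₃ρ₅₅+ρ₃₃ρ₆₆+ρ₃₃ρ₈₈+ρ₄₄ρ₅₅+ρ₄₄ρ₆₆+ρ₄₄ρ₈₈). If |ρ₁₈|² > T²_{a,−}, or |ρ₂₇|² > T²_{b,−}, or |ρ₃₆|² > T²_{b,+}, or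 |ρ₄₅|² > T²_{a,+}, then the partial transpose of τ²_{BC|A} over its first qubit is not positive semidefinite (so τ²_{BC|A} is entangled). -/

import Mathlib

open scoped ComplexOrder

/-- Index type for three qubits: `(i, j, k)` with `m - 1 = 4i + 2j + k`. -/
abbrev Q3 : Type := Fin 2 × Fin 2 × Fin 2

/-- Partial transpose over the first qubit:
`(M^{T₁})_{(i,j,k),(i',j',k')} = M_{(i',j,k),(i,j',k')}`. -/
def ptA (M : Matrix Q3 Q3 ℂ) : Matrix Q3 Q3 ℂ :=
  Matrix.of fun p q : Q3 => M (q.1, p.2.1, p.2.2) (p.1, q.2.1, q.2.2)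

/-- An X-type three-qubit state: positive semidefinite (hence Hermitian), trace one,
and the only possibly nonzero entries are on the diagonal and the anti-diagonal. -/
def IsXType (ρ : Matrix Q3 Q3 ℂ) : Prop :=
  ρ.PosSemidef ∧ ρ.trace = 1 ∧
    ∀ p q : Q3, q ≠ p → q ≠ (1 - p.1, 1 - p.2.1, 1 - p.2.2) → ρ p q = 0

/-- Cyclic reordering of a three-qubit matrix to ordering BCA:
`σ_{(j,k,i),(j',k',i')} = ρ_{(i,j,k),(i',j',k')}`. -/
def sigmaBCA (ρ : Matrix Q3 Q3 ℂ) : Matrix Q3 Q3 ℂ :=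
  Matrix.of fun p q : Q3 => ρ (p.2.2, p.1, p.2.1) (q.2.2, q.1, q.2.1)

/-- The steered matrix `τ² = (1/3) M + (2/3) (I₄/4 ⊗ Tr₁₂ M)`,
where `Tr₁₂` traces out the first two qubits. -/
noncomputable def tauTwo (M : Matrix Q3 Q3 ℂ) : Matrix Q3 Q3 ℂ :=
  (1/3 : ℂ) • M +
    (2/3 : ℂ) • Matrix.of (fun p q : Q3 =>
      (if p.1 = q.1 ∧ p.2.1 = q.2.1 then (1/4 : ℂ) else 0) *
        ∑ i : Fin 2, ∑ j : Fin 2, M (i, j, p.2.2) (i, j, q.2.2))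


open Matrix in
lemma psd_diag_re_nonneg' {n : Type*} [Fintype n] [DecidableEq n] {M : Matrix n n ℂ}
    (hM : M.PosSemidef) (p : n) : 0 ≤ (M p p).re := by
  have h := hM.re_dotProduct_nonneg (Pi.single p 1)
  simpa [Matrix.mulVec_single, dotProduct, Pi.single_apply, apply_ite,
    Finset.sum_ite_eq'] using h

open Matrix in
lemma psd_sq_le' {n : Type*} [Fintype n] [DecidableEq n] {M : Matrix n n ℂ}
    (hM : M.PosSemidef) (p q : n) :
    ‖M p q‖ ^ 2 ≤ (M p p).re * (M q q).re := by
  set o := M p q with ho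
  have hherm : M q p = star o := by
    have h1 := hM.isHermitian.apply q p
    simpa using h1.symm
  set dp := (M p p).re with hdp'
  set dq := (M q q).re with hdq'
  have hdp : 0 ≤ dp := psd_diag_re_nonneg' hM p
  have hdq : 0 ≤ dq := psd_diag_re_nonneg' hM q
  set c := Complex.normSq o with hc
  have hcn : 0 ≤ c := Complex.normSq_nonneg o
  have key : ∀ t : ℝ, 0 ≤ t^2 * dp - 2*t*c + c*dq := by
    intro t
    have h := hM.re_dotProduct_nonneg
      ((t : ℂ) • (Pi.single p 1 : n → ℂ) + (Pi.single q (-star o) : n → ℂ))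
    have hval : dotProduct
        (star ((t : ℂ) • (Pi.single p 1 : n → ℂ) + (Pi.single q (-star o) : n → ℂ)))
        (M *ᵥ ((t : ℂ) • (Pi.single p 1 : n → ℂ) + (Pi.single q (-star o) : n → ℂ)))
        = (t:ℂ)^2 * M p p - 2*t*(o * star o) + (o * star o) * M q q := by
      rw [Matrix.mulVec_add, Matrix.mulVec_smul, Matrix.mulVec_single, Matrix.mulVec_single,
        star_add, star_smul, add_dotProduct, smul_dotProduct,
        dotProduct_add, dotProduct_add, ← Pi.single_star, ← Pi.single_star,
        single_dotProduct, single_dotProduct, single_dotProduct,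
        single_dotProduct]
      simp only [hherm, Pi.smul_apply, smul_eq_mul, star_one, star_neg, star_star,
        Complex.star_def, Complex.conj_ofReal, Complex.conj_conj, Matrix.col_apply, op_smul_eq_mul]
      ring
    rw [hval] at h
    simp only [RCLike.re_to_complex] at h
    have h2 : ((t:ℂ)^2 * M p p - 2*t*(o * star o) + (o * star o) * M q q).re
        = t^2 * dp - 2*t*c + c*dq := by
      rw [show o * star o = (c : ℂ) by rw [Complex.star_def, Complex.mul_conj]]
      simp [Complex.sub_re, Complex.add_re, Complex.mul_re, ← Complex.ofReal_pow]
      rfl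
    rw [h2] at h
    exact h
  rw [Complex.sq_norm, ← hc]
  by_cases hdp0 : dp = 0
  · have h1 := key dq
    have h2 := key (dq + 1)
    have h3 : 0 ≤ c * dq := mul_nonneg hcn hdq
    rw [hdp0] at h1 h2 ⊢
    nlinarith
  · have hdpp : 0 < dp := lt_of_le_of_ne hdp (Ne.symm hdp0)
    have h1 := key (c / dp)
    have e : (c/dp)^2*dp - 2*(c/dp)*c + c*dq = c*dq - c^2/dp := by field_simp; ring
    rw [e] at h1
    have h3 : c^2/dp ≤ c*dq := by linarith
    have h4 : c^2 ≤ c*dq*dp := (div_le_iff₀ hdpp).mp h3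
    rcases eq_or_lt_of_le hcn with h0 | h0
    · rw [← h0]; exact mul_nonneg hdp hdq
    · have h5 : c*c ≤ c*(dp*dq) := by nlinarith
      exact le_of_mul_le_mul_left h5 h0

set_option maxHeartbeats 2000000 in
/-- entanglement (NPT) criterion for `τ²_{BC|A}`, witnessing steering from Bob and Charlie to Alice. -/
theorem tauTwo_BCA_npt (ρ : Matrix Q3 Q3 ℂ) (hX : IsXType ρ)
    (r11 r22 r33 r44 r55 r66 r77 r88 c18 c27 c36 c45 : ℝ)
    (hr11 : r11 = (ρ (0,0,0) (0,0,0)).re)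
    (hr22 : r22 = (ρ (0,0,1) (0,0,1)).re)
    (hr33 : r33 = (ρ (0,1,0) (0,1,0)).re)
    (hr44 : r44 = (ρ (0,1,1) (0,1,1)).re)
    (hr55 : r55 = (ρ (1,0,0) (1,0,0)).re)
    (hr66 : r66 = (ρ (1,0,1) (1,0,1)).re)
    (hr77 : r77 = (ρ (1,1,0) (1,1,0)).re)
    (hr88 : r88 = (ρ (1,1,1) (1,1,1)).re)
    (hc18 : c18 = ‖ρ (0,0,0) (1,1,1)‖)
    (hc27 : c27 = ‖ρ (0,0,1) (1,1,0)‖)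
    (hc36 : c36 = ‖ρ (0,1,0) (1,0,1)‖)
    (hc45 : c45 = ‖ρ (0,1,1) (1,0,0)‖)
    (T2am T2bm T2bp T2ap : ℝ)
    (hT2am : T2am = 9/4 * (r33 * r66) + 3/4 * (r11 * r66 + r22 * r66 + r44 * r66 + r33 * r55 + r33 * r77 + r33 * r88) +
        1/4 * (r11 * r55 + r11 * r77 + r11 * r88 + r22 * r55 + r22 * r77 + r22 * r88 + r44 * r55 + r44 * r77 + r44 * r88))
    (hT2bm : T2bm = 9/4 * (r44 * r55) + 3/4 * (r11 * r55 + r22 * r55 + r33 * r55 + r44 * r66 + r44 * r77 + r44 * r88) +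
        1/4 * (r11 * r66 + r11 * r77 + r11 * r88 + r22 * r66 + r22 * r77 + r22 * r88 + r33 * r66 + r33 * r77 + r33 * r88))
    (hT2bp : T2bp = 9/4 * (r11 * r88) + 3/4 * (r11 * r55 + r11 * r66 + r11 * r77 + r22 * r88 + r33 * r88 + r44 * r88) +
        1/4 * (r22 * r55 + r22 * r66 + r22 * r77 + r33 * r55 + r33 * r66 + r33 * r77 + r44 * r55 + r44 * r66 + r44 * r77))
    (hT2ap : T2ap = 9/4 * (r22 * r77) + 3/4 * (r22 * r55 + r22 * r66 + r22 * r88 + r11 * r77 + r33 * r77 + r44 * r77) +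
        1/4 * (r11 * r55 + r11 * r66 + r11 * r88 + r33 * r55 + r33 * r66 + r33 * r88 + r44 * r55 + r44 * r66 + r44 * r88))
    (h : c18 ^ 2 > T2am ∨
         c27 ^ 2 > T2bm ∨
         c36 ^ 2 > T2bp ∨
         c45 ^ 2 > T2ap) :
    ¬ (ptA (tauTwo (sigmaBCA ρ))).PosSemidef := by
  intro hPSD
  rcases h with hcase | hcase | hcase | hcase
  · have key := psd_sq_le' hPSD ((1,0,0) : Q3) ((0,1,1) : Q3)
    have hoff : (ptA (tauTwo (sigmaBCA ρ))) (1,0,0) (0,1,1) = ((1/3:ℝ):ℂ) * ρ (0,0,0) (1,1,1) := by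
      simp [ptA, tauTwo, sigmaBCA, smul_eq_mul]
      try norm_num
    have hpp : (ptA (tauTwo (sigmaBCA ρ))) (1,0,0) (1,0,0) = ((1/3:ℝ):ℂ) * ρ (0,1,0) (0,1,0)
        + ((1/6:ℝ):ℂ) * (ρ (0,0,0) (0,0,0) + ρ (0,0,1) (0,0,1) + ρ (0,1,0) (0,1,0) + ρ (0,1,1) (0,1,1)) := by
      simp [ptA, tauTwo, sigmaBCA, smul_eq_mul, Fin.sum_univ_two]
      try norm_num
      try ring
    have hqq : (ptA (tauTwo (sigmaBCA ρ))) (0,1,1) (0,1,1) = ((1/3:ℝ):ℂ) * ρ (1,0,1) (1,0,1)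
        + ((1/6:ℝ):ℂ) * (ρ (1,0,0) (1,0,0) + ρ (1,0,1) (1,0,1) + ρ (1,1,0) (1,1,0) + ρ (1,1,1) (1,1,1)) := by
      simp [ptA, tauTwo, sigmaBCA, smul_eq_mul, Fin.sum_univ_two]
      try norm_num
      try ring
    rw [hoff, hpp, hqq] at key
    have habs : ‖((1/3:ℝ):ℂ) * ρ (0,0,0) (1,1,1)‖ = 1/3 * c18 := by
      rw [norm_mul, hc18]
      norm_num [Complex.norm_real]
    rw [habs] at key
    simp only [Complex.add_re, Complex.re_ofReal_mul] at key
    rw [← hr11, ← hr22, ← hr33, ← hr44, ← hr55, ← hr66, ← hr77, ← hr88] at key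
    rw [hT2am] at hcase
    clear hoff hpp hqq hPSD
    nlinarith [key, hcase]
  · have key := psd_sq_le' hPSD ((1,1,0) : Q3) ((0,0,1) : Q3)
    have hoff : (ptA (tauTwo (sigmaBCA ρ))) (1,1,0) (0,0,1) = ((1/3:ℝ):ℂ) * ρ (0,0,1) (1,1,0) := by
      simp [ptA, tauTwo, sigmaBCA, smul_eq_mul]
      try norm_num
    have hpp : (ptA (tauTwo (sigmaBCA ρ))) (1,1,0) (1,1,0) = ((1/3:ℝ):ℂ) * ρ (0,1,1) (0,1,1)
        + ((1/6:ℝ):ℂ) * (ρ (0,0,0) (0,0,0) + ρ (0,0,1) (0,0,1) + ρ (0,1,0) (0,1,0) + ρ (0,1,1) (0,1,1)) := by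
      simp [ptA, tauTwo, sigmaBCA, smul_eq_mul, Fin.sum_univ_two]
      try norm_num
      try ring
    have hqq : (ptA (tauTwo (sigmaBCA ρ))) (0,0,1) (0,0,1) = ((1/3:ℝ):ℂ) * ρ (1,0,0) (1,0,0)
        + ((1/6:ℝ):ℂ) * (ρ (1,0,0) (1,0,0) + ρ (1,0,1) (1,0,1) + ρ (1,1,0) (1,1,0) + ρ (1,1,1) (1,1,1)) := by
      simp [ptA, tauTwo, sigmaBCA, smul_eq_mul, Fin.sum_univ_two]
      try norm_num
      try ring
    rw [hoff, hpp, hqq] at key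
    have habs : ‖((1/3:ℝ):ℂ) * ρ (0,0,1) (1,1,0)‖ = 1/3 * c27 := by
      rw [norm_mul, hc27]
      norm_num [Complex.norm_real]
    rw [habs] at key
    simp only [Complex.add_re, Complex.re_ofReal_mul] at key
    rw [← hr11, ← hr22, ← hr33, ← hr44, ← hr55, ← hr66, ← hr77, ← hr88] at key
    rw [hT2bm] at hcase
    clear hoff hpp hqq hPSD
    nlinarith [key, hcase]
  · have key := psd_sq_le' hPSD ((0,0,0) : Q3) ((1,1,1) : Q3)
    have hoff : (ptA (tauTwo (sigmaBCA ρ))) (0,0,0) (1,1,1) = ((1/3:ℝ):ℂ) * ρ (0,1,0) (1,0,1) := by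
      simp [ptA, tauTwo, sigmaBCA, smul_eq_mul]
      try norm_num
    have hpp : (ptA (tauTwo (sigmaBCA ρ))) (0,0,0) (0,0,0) = ((1/3:ℝ):ℂ) * ρ (0,0,0) (0,0,0)
        + ((1/6:ℝ):ℂ) * (ρ (0,0,0) (0,0,0) + ρ (0,0,1) (0,0,1) + ρ (0,1,0) (0,1,0) + ρ (0,1,1) (0,1,1)) := by
      simp [ptA, tauTwo, sigmaBCA, smul_eq_mul, Fin.sum_univ_two]
      try norm_num
      try ring
    have hqq : (ptA (tauTwo (sigmaBCA ρ))) (1,1,1) (1,1,1) = ((1/3:ℝ):ℂ) * ρ (1,1,1) (1,1,1)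
        + ((1/6:ℝ):ℂ) * (ρ (1,0,0) (1,0,0) + ρ (1,0,1) (1,0,1) + ρ (1,1,0) (1,1,0) + ρ (1,1,1) (1,1,1)) := by
      simp [ptA, tauTwo, sigmaBCA, smul_eq_mul, Fin.sum_univ_two]
      try norm_num
      try ring
    rw [hoff, hpp, hqq] at key
    have habs : ‖((1/3:ℝ):ℂ) * ρ (0,1,0) (1,0,1)‖ = 1/3 * c36 := by
      rw [norm_mul, hc36]
      norm_num [Complex.norm_real]
    rw [habs] at key
    simp only [Complex.add_re, Complex.re_ofReal_mul] at key
    rw [← hr11, ← hr22, ← hr33, ← hr44, ← hr55, ← hr66, ← hr77, ← hr88] at key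
    rw [hT2bp] at hcase
    clear hoff hpp hqq hPSD
    nlinarith [key, hcase]
  · have key := psd_sq_le' hPSD ((0,1,0) : Q3) ((1,0,1) : Q3)
    have hoff : (ptA (tauTwo (sigmaBCA ρ))) (0,1,0) (1,0,1) = ((1/3:ℝ):ℂ) * ρ (0,1,1) (1,0,0) := by
      simp [ptA, tauTwo, sigmaBCA, smul_eq_mul]
      try norm_num
    have hpp : (ptA (tauTwo (sigmaBCA ρ))) (0,1,0) (0,1,0) = ((1/3:ℝ):ℂ) * ρ (0,0,1) (0,0,1)
        + ((1/6:ℝ):ℂ) * (ρ (0,0,0) (0,0,0) + ρ (0,0,1) (0,0,1) + ρ (0,1,0) (0,1,0) + ρ (0,1,1) (0,1,1)) := by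
      simp [ptA, tauTwo, sigmaBCA, smul_eq_mul, Fin.sum_univ_two]
      try norm_num
      try ring
    have hqq : (ptA (tauTwo (sigmaBCA ρ))) (1,0,1) (1,0,1) = ((1/3:ℝ):ℂ) * ρ (1,1,0) (1,1,0)
        + ((1/6:ℝ):ℂ) * (ρ (1,0,0) (1,0,0) + ρ (1,0,1) (1,0,1) + ρ (1,1,0) (1,1,0) + ρ (1,1,1) (1,1,1)) := by
      simp [ptA, tauTwo, sigmaBCA, smul_eq_mul, Fin.sum_univ_two]
      try norm_num
      try ring
    rw [hoff, hpp, hqq] at key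
    have habs : ‖((1/3:ℝ):ℂ) * ρ (0,1,1) (1,0,0)‖ = 1/3 * c45 := by
      rw [norm_mul, hc45]
      norm_num [Complex.norm_real]
    rw [habs] at key
    simp only [Complex.add_re, Complex.re_ofReal_mul] at key
    rw [← hr11, ← hr22, ← hr33, ← hr44, ← hr55, ← hr66, ← hr77, ← hr88] at key
    rw [hT2ap] at hcase
    clear hoff hpp hqq hPSD
    nlinarith [key, hcase]
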